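/- For n ≥ 3, the middle graph M(P_n) of the path does not admit a J-colouring. -/

import Mathlib

open SimpleGraph

/-- A proper colouring of `G` with `k` colours in which every vertex's closed
neighbourhood meets every colour class (a J-colouring). -/
def IsJCol {V : Type*} (G : SimpleGraph V) {k : ℕ} (c : V → Fin k) : Prop :=
  (∀ u v, G.Adj u v → c u ≠ c v) ∧
  (∀ v : V, ∀ i : Fin k, ∃ u, (u = v ∨ G.Adj v u) ∧ c u = i)

/-- `G` admits a J-colouring with `k` colours. -/
def HasJCol {V : Type*} (G : SimpleGraph V) (k : ℕ) : Prop :=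
  ∃ c : V → Fin k, IsJCol G c

/-- The J-chromatic number: the maximum number of colours in a J-colouring. -/
noncomputable def Jnum {V : Type*} (G : SimpleGraph V) : ℕ :=
  sSup {k | HasJCol G k}

/-- A proper colouring in which every internal vertex (degree ≥ 2) has its closed
neighbourhood meeting every colour class (a J*-colouring). -/
def IsJStarCol {V : Type*} (G : SimpleGraph V) {k : ℕ} (c : V → Fin k) : Prop :=
  (∀ u v, G.Adj u v → c u ≠ c v) ∧
  (∀ v : V, (∃ a b, a ≠ b ∧ G.Adj v a ∧ G.Adj v b) →
    ∀ i : Fin k, ∃ u, (u = v ∨ G.Adj v u) ∧ c u = i)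

/-- `G` admits a J*-colouring with `k` colours. -/
def HasJStarCol {V : Type*} (G : SimpleGraph V) (k : ℕ) : Prop :=
  ∃ c : V → Fin k, IsJStarCol G c

/-- The modified J-chromatic number. -/
noncomputable def JStarNum {V : Type*} (G : SimpleGraph V) : ℕ :=
  sSup {k | HasJStarCol G k}

/-- The middle graph `M(G)`: vertices are the vertices and edges of `G`; two edges are
adjacent iff they are incident in `G`, a vertex and an edge are adjacent iff incident,
and no two vertices of `G` are adjacent. -/
def middleGraph {V : Type*} (G : SimpleGraph V) : SimpleGraph (V ⊕ G.edgeSet) where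
  Adj x y :=
    match x, y with
    | Sum.inl _, Sum.inl _ => False
    | Sum.inl u, Sum.inr e => u ∈ (e : Sym2 V)
    | Sum.inr e, Sum.inl u => u ∈ (e : Sym2 V)
    | Sum.inr e, Sum.inr f => e ≠ f ∧ ∃ u, u ∈ (e : Sym2 V) ∧ u ∈ (f : Sym2 V)
  symm := by
    constructor
    rintro (u | e) (v | f) h
    · exact h
    · exact h
    · exact h
    · exact ⟨h.1.symm, by obtain ⟨_, hu, hf⟩ := h.2; exact ⟨_, hf, hu⟩⟩
  loopless := by constructor; rintro (u | e) h
                 · exact h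
                 · exact h.1 rfl

/-
A J-colouring must show every colour in the closed neighbourhood of every vertex. In `M(P_n)` the
end vertex `0` of the path has the single neighbour `{0, 1}`, so at most two colours occur and
the colouring makes `M(P_n)` bipartite. But for `n ≥ 3` the vertex `1` and the edges `{0, 1}`,
`{1, 2}` form a triangle in `M(P_n)`.
-/

namespace SimpleGraph

section JColouring

variable {V : Type*} {G : SimpleGraph V} {k : ℕ} {c : V → Fin k}

theorem IsJCol.colorable (hc : IsJCol G c) : G.Colorable k :=
  ⟨Coloring.mk c fun h => hc.1 _ _ h⟩

theorem IsJCol.le_two_of_neighborSet_subset (hc : IsJCol G c) {v w : V}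
    (hv : G.neighborSet v ⊆ {w}) : k ≤ 2 := by
  have hcolours : (Finset.univ : Finset (Fin k)) ⊆ {c v, c w} := by
    intro i _
    obtain ⟨u, hu | hu, rfl⟩ := hc.2 v i
    · simp [hu]
    · obtain rfl : u = w := hv hu
      simp
  simpa using (Finset.card_le_card hcolours).trans Finset.card_le_two

theorem IsJCol.cliqueFree_three_of_neighborSet_subset (hc : IsJCol G c) {v w : V}
    (hv : G.neighborSet v ⊆ {w}) : G.CliqueFree 3 :=
  (hc.colorable.mono (hc.le_two_of_neighborSet_subset hv)).cliqueFree (by norm_num)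

end JColouring

theorem pathGraph_neighborSet_zero_subset {n : ℕ} (h : 1 < n) :
    (pathGraph n).neighborSet ⟨0, by omega⟩ ⊆ {⟨1, h⟩} := by
  intro v hv
  simp only [mem_neighborSet, pathGraph_adj] at hv
  simp only [Set.mem_singleton_iff, Fin.ext_iff]
  omega

end SimpleGraph

section MiddleGraph

variable {V : Type*} {G : SimpleGraph V}

theorem middleGraph_adj_inl_inr {v : V} {e : G.edgeSet} :
    (middleGraph G).Adj (Sum.inl v) (Sum.inr e) ↔ v ∈ (e : Sym2 V) :=
  Iff.rfl

theorem middleGraph_adj_inr_inr {e f : G.edgeSet} :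
    (middleGraph G).Adj (Sum.inr e) (Sum.inr f) ↔
      e ≠ f ∧ ∃ v, v ∈ (e : Sym2 V) ∧ v ∈ (f : Sym2 V) :=
  Iff.rfl

theorem middleGraph_neighborSet_inl_subset {v w : V} (h : G.Adj v w)
    (hv : G.neighborSet v ⊆ {w}) :
    (middleGraph G).neighborSet (Sum.inl v) ⊆ {Sum.inr ⟨s(v, w), G.mem_edgeSet.2 h⟩} := by
  rintro (u | ⟨e, he⟩) hadj
  · exact hadj.elim
  · obtain ⟨x, rfl⟩ := Sym2.mem_iff_exists.1 (middleGraph_adj_inl_inr.1 hadj)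
    obtain rfl : x = w := hv (G.mem_edgeSet.1 he)
    rfl

theorem middleGraph_not_cliqueFree_three {u v w : V} (huv : G.Adj u v) (hvw : G.Adj v w)
    (huw : u ≠ w) : ¬(middleGraph G).CliqueFree 3 := by
  classical
  set e : G.edgeSet := ⟨s(u, v), G.mem_edgeSet.2 huv⟩
  set f : G.edgeSet := ⟨s(v, w), G.mem_edgeSet.2 hvw⟩
  have hef : e ≠ f := by
    rw [Ne, Subtype.mk.injEq, Sym2.eq_iff]
    rintro (⟨rfl, -⟩ | ⟨rfl, -⟩)
    exacts [huv.ne rfl, huw rfl]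
  have hve : v ∈ (e : Sym2 V) := Sym2.mem_mk_right u v
  have hvf : v ∈ (f : Sym2 V) := Sym2.mem_mk_left v w
  exact fun h => h {Sum.inl v, Sum.inr e, Sum.inr f} <| is3Clique_triple_iff.2
    ⟨middleGraph_adj_inl_inr.2 hve, middleGraph_adj_inl_inr.2 hvf,
      middleGraph_adj_inr_inr.2 ⟨hef, v, hve, hvf⟩⟩

end MiddleGraph

/-- For `n ≥ 3`, the middle graph of the path `P_n` admits no J-colouring. -/
theorem middleGraph_path_no_JCol (n : ℕ) (hn : 3 ≤ n) :
    ¬∃ k, HasJCol (middleGraph (SimpleGraph.pathGraph n)) k := by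
  rintro ⟨k, c, hc⟩
  have h01 : (pathGraph n).Adj ⟨0, by omega⟩ ⟨1, by omega⟩ := by simp [pathGraph_adj]
  have h12 : (pathGraph n).Adj ⟨1, by omega⟩ ⟨2, by omega⟩ := by simp [pathGraph_adj]
  exact middleGraph_not_cliqueFree_three h01 h12 (by simp) <|
    hc.cliqueFree_three_of_neighborSet_subset <|
      middleGraph_neighborSet_inl_subset h01 (pathGraph_neighborSet_zero_subset (by omega))
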